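/- arXiv:2405.05532 — 3 statements merged into one kernel-verified Lean document; each statement's English description precedes it below -/
import Mathlib

section
/- Let $j : \mathbb{R}^\ell \to \mathbb{R}$ be twice continuously differentiable, $U_{ad} = \{v : a \le v \le b\}$ with $a < b$, and suppose $u^* \in U_{ad}$ satisfies the first-order condition $\nabla j(u^*) \cdot (u - u^*) \ge 0$ for all $u \in U_{ad}$, together with $j''(u^*)(v,v) > 0$ for all $v \in C_{u^*} \setminus \{0\}$. Then there exist $\eta > 0$ and $\delta > 0$ such that $j(u) \ge j(u^*) + \frac{\eta}{4}\|u - u^*\|^2$ for all $u \in U_{ad}$ with $\|u - u^*\| \le \delta$. In particular, $u^*$ is a strict local minimum of $j$ on $U_{ad}$. -/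
/-!
Write `D = j'(u*)`, `Q = j''(u*)` and let `K` be the tangent cone of the box at `u*`, so that
`u - u* ∈ K` for every admissible `u`. The first-order condition splits coordinatewise into
`0 ≤ w_k ∂_k j(u*)` for `w ∈ K`; hence `D ≥ 0` on `K`, and `K ∩ ker D` is the critical cone, on
which `Q` is positive definite. A compactness argument on the unit sphere of `K` upgrades this to
`η ‖w‖² ≤ Q(w, w) + M ‖w‖ D w` on all of `K`. For `‖v‖ ≤ 1 / (M + 1)` the penalty is absorbed by
the first-order term of the Taylor expansion, `D v + Q(v, v) / 2 ≥ η ‖v‖² / 2`, and the Peano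
remainder costs at most `η ‖v‖² / 4`.
-/

open Asymptotics Filter Topology Metric

theorem ContDiffAt.isLittleO_sub_taylor_two {E F : Type*} [NormedAddCommGroup E]
    [NormedSpace ℝ E] [NormedAddCommGroup F] [NormedSpace ℝ F] {f : E → F} {x : E}
    (hf : ContDiffAt ℝ 2 f x) :
    (fun v => f (x + v) - f x - fderiv ℝ f x v - (1 / 2 : ℝ) • fderiv ℝ (fderiv ℝ f) x v v)
      =o[𝓝 0] fun v => ‖v‖ ^ 2 := by
  set Q := fderiv ℝ (fderiv ℝ f) x
  set R : E → F := fun v => f (x + v) - f x - fderiv ℝ f x v - (1 / 2 : ℝ) • Q v v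
  have hsymm : IsSymmSndFDerivAt ℝ f x :=
    hf.isSymmSndFDerivAt (by simp [minSmoothness_of_isRCLikeNormedField])
  have hQ : HasFDerivAt (fderiv ℝ f) Q x :=
    ((hf.fderiv_right (m := 1) (by norm_num)).differentiableAt (by norm_num)).hasFDerivAt
  have hdiff : ∀ᶠ v in 𝓝 (0 : E), DifferentiableAt ℝ f (x + v) := by
    have htendsto : Tendsto (fun v : E => x + v) (𝓝 0) (𝓝 x) := by
      simpa using (continuous_const_add x).tendsto (0 : E)
    exact htendsto.eventually
      ((hf.eventually (by simp)).mono fun y hy => hy.differentiableAt (by norm_num))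
  -- the symmetry of `Q` makes `v ↦ Q v v / 2` have derivative `Q v`
  have hderiv : ∀ v, DifferentiableAt ℝ f (x + v) →
      HasFDerivAt R (fderiv ℝ f (x + v) - fderiv ℝ f x - Q v) v := by
    intro v hv
    have hquad : HasFDerivAt (fun v => Q v v) (Q v + Q.flip v) v :=
      Q.hasFDerivAt.clm_apply (hasFDerivAt_id v)
    convert (((hv.hasFDerivAt.comp v ((hasFDerivAt_id v).const_add x)).sub_const (f x)).sub
      (fderiv ℝ f x).hasFDerivAt).sub (hquad.const_smul (1 / 2 : ℝ)) using 1
    · rfl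
    · ext w
      simp [show Q w v = Q v w from hsymm w v]
      module
  rw [isLittleO_iff]
  intro ε hε
  obtain ⟨r, hr, hball⟩ := eventually_nhds_iff_ball.1
    (hdiff.and ((hasFDerivAt_iff_isLittleO_nhds_zero.1 hQ).def hε))
  filter_upwards [ball_mem_nhds (0 : E) hr] with v hv
  have hsub : closedBall (0 : E) ‖v‖ ⊆ ball 0 r := closedBall_subset_ball (by simpa using hv)
  have hbound : ∀ y ∈ closedBall (0 : E) ‖v‖, ‖fderiv ℝ R y‖ ≤ ε * ‖v‖ := by
    intro y hy
    rw [(hderiv y (hball y (hsub hy)).1).fderiv]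
    calc _ ≤ ε * ‖y‖ := (hball y (hsub hy)).2
      _ ≤ ε * ‖v‖ := by gcongr; simpa using hy
  simpa [R, sq, mul_assoc] using
    (convex_closedBall (0 : E) ‖v‖).norm_image_sub_le_of_norm_fderiv_le
      (fun y hy => (hderiv y (hball y (hsub hy)).1).differentiableAt) hbound
      (mem_closedBall_self (norm_nonneg v)) (by simp : v ∈ closedBall (0 : E) ‖v‖)

theorem IsCompact.exists_pos_le_add_nat_mul {X : Type*} [TopologicalSpace X] {S : Set X}
    (hS : IsCompact S) {f g : X → ℝ} (hf : Continuous f) (hg : Continuous g)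
    (hg0 : ∀ x ∈ S, 0 ≤ g x) (hfg : ∀ x ∈ S, g x = 0 → 0 < f x) :
    ∃ η > 0, ∃ M : ℕ, ∀ x ∈ S, η ≤ f x + M * g x := by
  have hcover : S ⊆ ⋃ n : ℕ, {x | 1 / (n + 1 : ℝ) < f x + n * g x} := by
    intro x hx
    rcases (hg0 x hx).eq_or_lt with hzero | hpos
    · obtain ⟨n, hn⟩ := exists_nat_one_div_lt (hfg x hx hzero.symm)
      exact Set.mem_iUnion.2 ⟨n, by simpa [← hzero] using hn⟩
    · obtain ⟨n, hn⟩ := exists_nat_gt ((1 - f x) / g x)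
      refine Set.mem_iUnion.2 ⟨n, ?_⟩
      calc 1 / (n + 1 : ℝ) ≤ 1 := div_le_one_of_le₀ (by simp) (by positivity)
        _ < f x + n * g x := by linarith [(div_lt_iff₀ hpos).1 hn]
  obtain ⟨t, ht⟩ :=
    hS.elim_finite_subcover _ (fun n => isOpen_lt continuous_const (by fun_prop)) hcover
  refine ⟨1 / (t.sup id + 1 : ℝ), by positivity, t.sup id, fun x hx => ?_⟩
  obtain ⟨n, hn, hxn⟩ := Set.mem_iUnion₂.1 (ht hx)
  have hle : (n : ℝ) ≤ t.sup id := by exact_mod_cast Finset.le_sup (f := id) hn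
  calc 1 / ((t.sup id : ℕ) + 1 : ℝ) ≤ 1 / (n + 1) := by gcongr
    _ ≤ f x + n * g x := hxn.le
    _ ≤ f x + (t.sup id : ℕ) * g x := by gcongr; exact hg0 x hx

theorem exists_coercive_on_cone {E : Type*} [NormedAddCommGroup E] [NormedSpace ℝ E]
    [ProperSpace E] {K : Set E} (hK : IsClosed K) (hKsmul : ∀ r : ℝ, 0 ≤ r → ∀ w ∈ K, r • w ∈ K)
    (D : E →L[ℝ] ℝ) (Q : E →L[ℝ] E →L[ℝ] ℝ) (hD : ∀ w ∈ K, 0 ≤ D w)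
    (hQ : ∀ w ∈ K, w ≠ 0 → D w = 0 → 0 < Q w w) :
    ∃ η > 0, ∃ M : ℝ, 0 ≤ M ∧ ∀ w ∈ K, η * ‖w‖ ^ 2 ≤ Q w w + M * ‖w‖ * D w := by
  obtain ⟨η, hη, M, hM⟩ := ((isCompact_sphere (0 : E) 1).inter_left hK).exists_pos_le_add_nat_mul
    (f := fun w => Q w w) (by fun_prop) D.continuous (fun w hw => hD w hw.1)
    (fun w hw => hQ w hw.1 (ne_zero_of_mem_unit_sphere ⟨w, hw.2⟩))
  refine ⟨η, hη, M, M.cast_nonneg, fun w hw => ?_⟩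
  rcases eq_or_ne w 0 with rfl | hw0
  · simp
  have hr : 0 < ‖w‖ := norm_pos_iff.2 hw0
  have hunit := hM (‖w‖⁻¹ • w) ⟨hKsmul _ (by positivity) w hw, by simp [norm_smul, hr.ne']⟩
  simp only [map_smul, FunLike.coe_smul, Pi.smul_apply, smul_eq_mul] at hunit
  have := mul_le_mul_of_nonneg_left hunit (sq_nonneg ‖w‖)
  field_simp at this
  linarith

section Box

variable {ℓ : ℕ}

def boxTangentCone (a b u : EuclideanSpace ℝ (Fin ℓ)) : Set (EuclideanSpace ℝ (Fin ℓ)) :=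
  {w | ∀ k, (u k = a k → 0 ≤ w k) ∧ (u k = b k → w k ≤ 0)}

theorem isClosed_boxTangentCone (a b u : EuclideanSpace ℝ (Fin ℓ)) :
    IsClosed (boxTangentCone a b u) := by
  simp only [boxTangentCone, Set.ofPred_forall, Set.ofPred_and]
  exact isClosed_iInter fun k =>
    (isClosed_iInter fun _ => isClosed_le continuous_const (by fun_prop)).inter
      (isClosed_iInter fun _ => isClosed_le (by fun_prop) continuous_const)

theorem smul_mem_boxTangentCone {a b u w : EuclideanSpace ℝ (Fin ℓ)} {r : ℝ} (hr : 0 ≤ r)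
    (hw : w ∈ boxTangentCone a b u) : r • w ∈ boxTangentCone a b u := fun k =>
  ⟨fun ha => mul_nonneg hr ((hw k).1 ha),
    fun hb => mul_nonpos_of_nonneg_of_nonpos hr ((hw k).2 hb)⟩

theorem sub_mem_boxTangentCone {a b u v : EuclideanSpace ℝ (Fin ℓ)}
    (hv : ∀ k, a k ≤ v k ∧ v k ≤ b k) : v - u ∈ boxTangentCone a b u := fun k =>
  ⟨fun ha => by simp [ha, (hv k).1], fun hb => by simp [hb, (hv k).2]⟩

theorem apply_eq_sum_mul_apply_single (D : EuclideanSpace ℝ (Fin ℓ) →L[ℝ] ℝ)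
    (w : EuclideanSpace ℝ (Fin ℓ)) : D w = ∑ k, w k * D (EuclideanSpace.single k 1) := by
  conv_lhs => rw [← (EuclideanSpace.basisFun (Fin ℓ) ℝ).sum_repr w]
  simp [map_sum]

theorem mul_apply_single_nonneg_of_mem_boxTangentCone {a b u w : EuclideanSpace ℝ (Fin ℓ)}
    (hu : ∀ k, a k ≤ u k ∧ u k ≤ b k) {D : EuclideanSpace ℝ (Fin ℓ) →L[ℝ] ℝ}
    (hD : ∀ v : EuclideanSpace ℝ (Fin ℓ), (∀ k, a k ≤ v k ∧ v k ≤ b k) → 0 ≤ D (v - u))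
    (hw : w ∈ boxTangentCone a b u) (k : Fin ℓ) : 0 ≤ w k * D (EuclideanSpace.single k 1) := by
  set g := D (EuclideanSpace.single k 1)
  have hcoord : ∀ c, a k ≤ c → c ≤ b k → 0 ≤ (c - u k) * g := by
    intro c hac hcb
    have hmove := hD (u + (c - u k) • EuclideanSpace.single k 1) fun i => by
      rcases eq_or_ne i k with rfl | hik
      · simp [hac, hcb]
      · simp [hik, hu i]
    simpa using hmove
  have hab : a k ≤ b k := (hu k).1.trans (hu k).2
  rcases lt_trichotomy g 0 with hneg | hzero | hpos
  · have hub : u k = b k := le_antisymm (hu k).2 (by nlinarith [hcoord (b k) hab le_rfl])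
    nlinarith [(hw k).2 hub]
  · simp [hzero]
  · have hlb : u k = a k := le_antisymm (by nlinarith [hcoord (a k) le_rfl hab]) (hu k).1
    nlinarith [(hw k).1 hlb]

theorem apply_nonneg_of_mem_boxTangentCone {a b u w : EuclideanSpace ℝ (Fin ℓ)}
    (hu : ∀ k, a k ≤ u k ∧ u k ≤ b k) {D : EuclideanSpace ℝ (Fin ℓ) →L[ℝ] ℝ}
    (hD : ∀ v : EuclideanSpace ℝ (Fin ℓ), (∀ k, a k ≤ v k ∧ v k ≤ b k) → 0 ≤ D (v - u))
    (hw : w ∈ boxTangentCone a b u) : 0 ≤ D w := by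
  rw [apply_eq_sum_mul_apply_single]
  exact Finset.sum_nonneg fun k _ => mul_apply_single_nonneg_of_mem_boxTangentCone hu hD hw k

theorem apply_single_eq_zero_of_mem_boxTangentCone {a b u w : EuclideanSpace ℝ (Fin ℓ)}
    (hu : ∀ k, a k ≤ u k ∧ u k ≤ b k) {D : EuclideanSpace ℝ (Fin ℓ) →L[ℝ] ℝ}
    (hD : ∀ v : EuclideanSpace ℝ (Fin ℓ), (∀ k, a k ≤ v k ∧ v k ≤ b k) → 0 ≤ D (v - u))
    (hw : w ∈ boxTangentCone a b u) (hDw : D w = 0) (k : Fin ℓ)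
    (hk : D (EuclideanSpace.single k 1) ≠ 0) : w k = 0 := by
  rw [apply_eq_sum_mul_apply_single] at hDw
  have hterm := (Finset.sum_eq_zero_iff_of_nonneg fun k _ =>
    mul_apply_single_nonneg_of_mem_boxTangentCone hu hD hw k).1 hDw k (Finset.mem_univ k)
  exact (mul_eq_zero.1 hterm).resolve_right hk

end Box

theorem second_order_sufficient_condition_general (ℓ : ℕ)
    (a b : EuclideanSpace ℝ (Fin ℓ))
    (j : EuclideanSpace ℝ (Fin ℓ) → ℝ) (hj : ContDiff ℝ 2 j)
    (u_star : EuclideanSpace ℝ (Fin ℓ))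
    (hmem : ∀ k, a k ≤ u_star k ∧ u_star k ≤ b k)
    (hfoc : ∀ u : EuclideanSpace ℝ (Fin ℓ), (∀ k, a k ≤ u k ∧ u k ≤ b k) →
      0 ≤ fderiv ℝ j u_star (u - u_star))
    (hsoc : ∀ v : EuclideanSpace ℝ (Fin ℓ), v ≠ 0 →
      (∀ k, (u_star k = a k → 0 ≤ v k) ∧ (u_star k = b k → v k ≤ 0) ∧
        (fderiv ℝ j u_star (EuclideanSpace.single k 1) ≠ 0 → v k = 0)) →
      0 < fderiv ℝ (fderiv ℝ j) u_star v v) :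
    ∃ η > 0, ∃ δ > 0, ∀ u : EuclideanSpace ℝ (Fin ℓ),
      (∀ k, a k ≤ u k ∧ u k ≤ b k) → ‖u - u_star‖ ≤ δ →
      j u_star + η / 4 * ‖u - u_star‖ ^ 2 ≤ j u := by
  obtain ⟨η, hη, M, hM, hcoer⟩ := exists_coercive_on_cone (isClosed_boxTangentCone a b u_star)
    (fun r hr w hw => smul_mem_boxTangentCone hr hw) (fderiv ℝ j u_star)
    (fderiv ℝ (fderiv ℝ j) u_star)
    (fun w hw => apply_nonneg_of_mem_boxTangentCone hmem hfoc hw)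
    (fun w hw hw0 hDw => hsoc w hw0 fun k =>
      ⟨(hw k).1, (hw k).2, apply_single_eq_zero_of_mem_boxTangentCone hmem hfoc hw hDw k⟩)
  obtain ⟨δ₀, hδ₀, htaylor⟩ := Metric.eventually_nhds_iff.1
    ((hj.contDiffAt.isLittleO_sub_taylor_two).def (show 0 < η / 4 by positivity))
  refine ⟨η, hη, min (δ₀ / 2) (1 / (M + 1)), by positivity, fun u hu hδ => ?_⟩
  set v := u - u_star
  have hv : v ∈ boxTangentCone a b u_star := sub_mem_boxTangentCone hu
  have hremainder := htaylor (show dist v 0 < δ₀ by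
    rw [dist_zero_right]; linarith [min_le_left (δ₀ / 2) (1 / (M + 1))])
  have hMv : M * ‖v‖ ≤ 1 := by
    calc M * ‖v‖ ≤ M * (1 / (M + 1)) := by gcongr; exact hδ.trans (min_le_right _ _)
      _ ≤ 1 := by rw [mul_one_div]; exact (div_le_one (by positivity)).2 (lt_add_one M).le
  rw [show u_star + v = u by simp [v], norm_pow, norm_norm, smul_eq_mul, Real.norm_eq_abs,
    abs_le] at hremainder
  have hDv := apply_nonneg_of_mem_boxTangentCone hmem hfoc hv
  linarith [hremainder.1, hcoer v hv, mul_nonneg hDv (sub_nonneg.2 hMv)]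

theorem second_order_sufficient_condition (ℓ : ℕ)
    (a b : EuclideanSpace ℝ (Fin ℓ)) (hab : ∀ k, a k < b k)
    (j : EuclideanSpace ℝ (Fin ℓ) → ℝ) (hj : ContDiff ℝ 2 j)
    (u_star : EuclideanSpace ℝ (Fin ℓ))
    (hmem : ∀ k, a k ≤ u_star k ∧ u_star k ≤ b k)
    (hfoc : ∀ u : EuclideanSpace ℝ (Fin ℓ), (∀ k, a k ≤ u k ∧ u k ≤ b k) →
      0 ≤ fderiv ℝ j u_star (u - u_star))
    (hsoc : ∀ v : EuclideanSpace ℝ (Fin ℓ), v ≠ 0 →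
      (∀ k, (u_star k = a k → 0 ≤ v k) ∧ (u_star k = b k → v k ≤ 0) ∧
        (fderiv ℝ j u_star (EuclideanSpace.single k 1) ≠ 0 → v k = 0)) →
      0 < fderiv ℝ (fderiv ℝ j) u_star v v) :
    ∃ η > 0, ∃ δ > 0, ∀ u : EuclideanSpace ℝ (Fin ℓ),
      (∀ k, a k ≤ u k ∧ u k ≤ b k) → ‖u - u_star‖ ≤ δ →
      j u_star + η / 4 * ‖u - u_star‖ ^ 2 ≤ j u :=
  second_order_sufficient_condition_general ℓ a b j hj u_star hmem hfoc hsoc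
end

section
/- Let $j : \mathbb{R}^\ell \to \mathbb{R}$ be twice continuously differentiable, $U_{ad} = \{v : a \le v \le b\}$ with $a < b$, and suppose $u^* \in U_{ad}$ satisfies the first-order variational inequality $\nabla j(u^*) \cdot (u - u^*) \ge 0$ for all $u \in U_{ad}$. Then the following are equivalent: (i) $j''(u^*)(v,v) > 0$ for all $v \in C_{u^*} \setminus \{0\}$; (ii) there exist $\tau > 0$ and $\nu > 0$ such that $j''(u^*)(v,v) \ge \nu \|v\|^2$ for all $v \in C^{\tau}_{u^*}$. -/
theorem equivalent_second_order_condition (ℓ : ℕ)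
    (a b : EuclideanSpace ℝ (Fin ℓ)) (hab : ∀ k, a k < b k)
    (j : EuclideanSpace ℝ (Fin ℓ) → ℝ) (hj : ContDiff ℝ 2 j)
    (u_star : EuclideanSpace ℝ (Fin ℓ))
    (hmem : ∀ k, a k ≤ u_star k ∧ u_star k ≤ b k)
    (hfoc : ∀ u : EuclideanSpace ℝ (Fin ℓ), (∀ k, a k ≤ u k ∧ u k ≤ b k) →
      0 ≤ fderiv ℝ j u_star (u - u_star)) :
    (∀ v : EuclideanSpace ℝ (Fin ℓ), v ≠ 0 →
      (∀ k, (u_star k = a k → 0 ≤ v k) ∧ (u_star k = b k → v k ≤ 0) ∧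
        (|fderiv ℝ j u_star (EuclideanSpace.single k 1)| > 0 → v k = 0)) →
      0 < fderiv ℝ (fderiv ℝ j) u_star v v)
    ↔
    (∃ τ > 0, ∃ ν > 0, ∀ v : EuclideanSpace ℝ (Fin ℓ),
      (∀ k, (u_star k = a k → 0 ≤ v k) ∧ (u_star k = b k → v k ≤ 0) ∧
        (|fderiv ℝ j u_star (EuclideanSpace.single k 1)| > τ → v k = 0)) →
      ν * ‖v‖ ^ 2 ≤ fderiv ℝ (fderiv ℝ j) u_star v v) := by
  classical
  set B := fderiv ℝ (fderiv ℝ j) u_star with hBdef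
  set d : Fin ℓ → ℝ := fun k => fderiv ℝ j u_star (EuclideanSpace.single k 1) with hddef
  have hBcont : Continuous fun v : EuclideanSpace ℝ (Fin ℓ) => B v v :=
    (B.continuous).clm_apply continuous_id
  constructor
  · intro hpos
    -- choose τ
    set s : Finset (Fin ℓ) := Finset.univ.filter (fun k => 0 < |d k|) with hsdef
    set τ : ℝ := if hs : s.Nonempty then s.inf' hs (fun k => |d k|) / 2 else 1 with hτdef
    have hinfpos : ∀ hs : s.Nonempty, 0 < s.inf' hs (fun k => |d k|) := by
      intro hs
      rw [Finset.lt_inf'_iff]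
      intro k hk
      exact (Finset.mem_filter.mp hk).2
    have hτpos : 0 < τ := by
      rw [hτdef]
      split_ifs with hs
      · have := hinfpos hs; linarith
      · norm_num
    have hτlt : ∀ k, 0 < |d k| → τ < |d k| := by
      intro k hk
      have hks : k ∈ s := Finset.mem_filter.mpr ⟨Finset.mem_univ k, hk⟩
      have hs : s.Nonempty := ⟨k, hks⟩
      have h1 : s.inf' hs (fun k => |d k|) ≤ |d k| := Finset.inf'_le _ hks
      have h2 := hinfpos hs
      rw [hτdef]
      simp only [dif_pos hs]
      linarith
    -- critical cone on unit sphere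
    set S : Set (EuclideanSpace ℝ (Fin ℓ)) :=
      {v | (∀ k, (u_star k = a k → 0 ≤ v k) ∧ (u_star k = b k → v k ≤ 0) ∧
        (0 < |d k| → v k = 0)) ∧ ‖v‖ = 1} with hSdef
    have hSclosed : IsClosed S := by
      have h1 : IsClosed {v : EuclideanSpace ℝ (Fin ℓ) |
          ∀ k, (u_star k = a k → 0 ≤ v k) ∧ (u_star k = b k → v k ≤ 0) ∧
          (0 < |d k| → v k = 0)} := by
        have heq : {v : EuclideanSpace ℝ (Fin ℓ) |
            ∀ k, (u_star k = a k → 0 ≤ v k) ∧ (u_star k = b k → v k ≤ 0) ∧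
            (0 < |d k| → v k = 0)} =
            ⋂ k, ({v : EuclideanSpace ℝ (Fin ℓ) | u_star k = a k → 0 ≤ v k} ∩
              ({v : EuclideanSpace ℝ (Fin ℓ) | u_star k = b k → v k ≤ 0} ∩
               {v : EuclideanSpace ℝ (Fin ℓ) | 0 < |d k| → v k = 0})) := by
          ext v; simp [Set.mem_iInter, forall_and]
        rw [heq]
        refine isClosed_iInter fun k => ?_
        have hcont : Continuous fun v : EuclideanSpace ℝ (Fin ℓ) => v k :=
          (EuclideanSpace.proj k).continuous
        refine IsClosed.inter ?_ (IsClosed.inter ?_ ?_)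
        · by_cases h : u_star k = a k
          · have : {v : EuclideanSpace ℝ (Fin ℓ) | u_star k = a k → 0 ≤ v k} =
                {v : EuclideanSpace ℝ (Fin ℓ) | 0 ≤ v k} := by ext v; simp [h]
            rw [this]; exact isClosed_le continuous_const hcont
          · have : {v : EuclideanSpace ℝ (Fin ℓ) | u_star k = a k → 0 ≤ v k} =
                Set.univ := by ext v; simp [h]
            rw [this]; exact isClosed_univ
        · by_cases h : u_star k = b k
          · have : {v : EuclideanSpace ℝ (Fin ℓ) | u_star k = b k → v k ≤ 0} =
                {v : EuclideanSpace ℝ (Fin ℓ) | v k ≤ 0} := by ext v; simp [h]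
            rw [this]; exact isClosed_le hcont continuous_const
          · have : {v : EuclideanSpace ℝ (Fin ℓ) | u_star k = b k → v k ≤ 0} =
                Set.univ := by ext v; simp [h]
            rw [this]; exact isClosed_univ
        · by_cases h : 0 < |d k|
          · have : {v : EuclideanSpace ℝ (Fin ℓ) | 0 < |d k| → v k = 0} =
                {v : EuclideanSpace ℝ (Fin ℓ) | v k = 0} := by ext v; simp [h]
            rw [this]; exact isClosed_eq hcont continuous_const
          · have : {v : EuclideanSpace ℝ (Fin ℓ) | 0 < |d k| → v k = 0} =
                Set.univ := by ext v; simp [h]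
            rw [this]; exact isClosed_univ
      exact h1.inter (isClosed_eq continuous_norm continuous_const)
    have hSsub : S ⊆ Metric.closedBall 0 1 := by
      intro v hv
      simp [Metric.mem_closedBall, dist_zero_right, hv.2]
    have hScompact : IsCompact S :=
      (isCompact_closedBall (0 : EuclideanSpace ℝ (Fin ℓ)) 1).of_isClosed_subset hSclosed hSsub
    by_cases hSne : S.Nonempty
    · obtain ⟨v0, hv0S, hv0min⟩ := hScompact.exists_isMinOn hSne hBcont.continuousOn
      set ν : ℝ := B v0 v0 with hνdef
      have hv0ne : v0 ≠ 0 := by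
        intro h
        rw [h] at hv0S
        simp [hSdef] at hv0S
      have hνpos : 0 < ν := hpos v0 hv0ne hv0S.1
      refine ⟨τ, hτpos, ν, hνpos, ?_⟩
      intro v hv
      have hvC : ∀ k, (u_star k = a k → 0 ≤ v k) ∧ (u_star k = b k → v k ≤ 0) ∧
          (0 < |d k| → v k = 0) :=
        fun k => ⟨(hv k).1, (hv k).2.1, fun h => (hv k).2.2 (hτlt k h)⟩
      by_cases hv0 : v = 0
      · simp [hv0]
      · have hn : 0 < ‖v‖ := norm_pos_iff.mpr hv0
        set w : EuclideanSpace ℝ (Fin ℓ) := ‖v‖⁻¹ • v with hwdef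
        have hwk : ∀ k, w k = ‖v‖⁻¹ * v k := fun k => rfl
        have hwS : w ∈ S := by
          constructor
          · intro k
            refine ⟨fun h => ?_, fun h => ?_, fun h => ?_⟩
            · rw [hwk]; exact mul_nonneg (by positivity) ((hvC k).1 h)
            · rw [hwk]
              exact mul_nonpos_of_nonneg_of_nonpos (by positivity) ((hvC k).2.1 h)
            · rw [hwk, (hvC k).2.2 h, mul_zero]
          · rw [hwdef, norm_smul]
            simp [hn.ne', abs_of_pos (inv_pos.mpr hn)]
        have hmin : ν ≤ B w w := hv0min hwS
        have hveq : v = ‖v‖ • w := by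
          rw [hwdef, smul_smul, mul_inv_cancel₀ hn.ne', one_smul]
        have key : ∀ (c : ℝ) (x : EuclideanSpace ℝ (Fin ℓ)),
            B (c • x) (c • x) = c * (c * B x x) := by
          intro c x
          rw [map_smul, B.map_smul, ContinuousLinearMap.smul_apply, smul_eq_mul, smul_eq_mul]
        have hquad : B v v = ‖v‖ * (‖v‖ * B w w) := by
          conv_lhs => rw [hveq]
          exact key _ _
        rw [hquad]
        nlinarith [sq_nonneg ‖v‖]
    · refine ⟨τ, hτpos, 1, one_pos, ?_⟩
      intro v hv
      by_cases hv0 : v = 0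
      · simp [hv0]
      · exfalso
        apply hSne
        have hn : 0 < ‖v‖ := norm_pos_iff.mpr hv0
        refine ⟨‖v‖⁻¹ • v, ⟨fun k => ?_, ?_⟩⟩
        · have hwk : (‖v‖⁻¹ • v) k = ‖v‖⁻¹ * v k := rfl
          refine ⟨fun h => ?_, fun h => ?_, fun h => ?_⟩
          · rw [hwk]; exact mul_nonneg (by positivity) ((hv k).1 h)
          · rw [hwk]
            exact mul_nonpos_of_nonneg_of_nonpos (by positivity) ((hv k).2.1 h)
          · rw [hwk, (hv k).2.2 (hτlt k h), mul_zero]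
        · rw [norm_smul]
          simp [hn.ne', abs_of_pos (inv_pos.mpr hn)]
  · rintro ⟨τ, hτ, ν, hν, h⟩ v hv0 hvC
    have hv' : ∀ k, (u_star k = a k → 0 ≤ v k) ∧ (u_star k = b k → v k ≤ 0) ∧
        (|d k| > τ → v k = 0) :=
      fun k => ⟨(hvC k).1, (hvC k).2.1, fun hk => (hvC k).2.2 (lt_trans hτ hk)⟩
    have hle := h v hv'
    have hn : 0 < ‖v‖ := norm_pos_iff.mpr hv0
    have : (0:ℝ) < ν * ‖v‖ ^ 2 := by positivity
    linarith
end

section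
/- Let $K \subset \mathbb{R}^\ell$ be compact and convex, $j : K \to \mathbb{R}$ continuous, and $(j_h)$ a family of continuous functions on $K$ satisfying: $v_h \to v$ implies $j_h(v_h) \to j(v)$. Suppose $u^* \in K$ is a strict local minimum of $j$ on $K$, i.e. there is $\delta > 0$ such that $u^*$ is the unique minimizer of $j$ on $K \cap \overline{B}_\delta(u^*)$. Then for all sufficiently small $h$, $j_h$ attains a local minimum $u_h^*$ on $K$ with $u_h^* \in \mathrm{int}\, \overline{B}_\delta(u^*)$, and $u_h^* \to u^*$ and $j_h(u_h^*) \to j(u^*)$ as $h \to 0$. -/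
/-!
Minimize `jh h` over the compact set `K ∩ closedBall u_star δ`. Every cluster point `v` of these
minimizers as `h → 0⁺` satisfies `j v ≤ j u_star`, because `jh h (uh h) ≤ jh h u_star` and continuous
convergence passes to the limit on both sides; by strictness `v = u_star`, so by compactness the
minimizers converge to `u_star`. Eventually they lie in the open ball, where a minimizer over the
ball is a local minimizer over `K`.
-/

open Filter Topology Metric Set

theorem tendsto_piecewise_range_of_tendsto_comp {ι β α : Type*} [TopologicalSpace α]
    {l : Filter β} (hl : l ≤ cofinite) {θ : ι → β} {f : β → α} {v : α}
    [DecidablePred (· ∈ range θ)] (hf : Tendsto (f ∘ θ) cofinite (𝓝 v)) :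
    Tendsto ((range θ).piecewise f fun _ ↦ v) l (𝓝 v) := by
  refine Tendsto.piecewise (fun U hU ↦ ?_) tendsto_const_nhds
  have hbad : (θ '' {i | f (θ i) ∉ U})ᶜ ∈ l :=
    hl ((eventually_cofinite.mp (hf hU)).image θ).compl_mem_cofinite
  refine mem_inf_of_inter hbad (mem_principal_self _) ?_
  rintro _ ⟨hgood, i, rfl⟩
  by_contra hi
  exact hgood ⟨i, hi, rfl⟩

theorem nhdsGT_le_cofinite (a : ℝ) : 𝓝[>] a ≤ cofinite :=
  (nhdsGT_le_nhdsNE a).trans (nhdsNE_le_cofinite a)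

theorem IsMinOn.isLocalMinOn_of_mem_nhds {α β : Type*} [TopologicalSpace α] [Preorder β]
    {f : α → β} {s t : Set α} {a : α} (hf : IsMinOn f (s ∩ t) a) (ht : t ∈ 𝓝 a) :
    IsLocalMinOn f s a := by
  rw [IsLocalMinOn, nhdsWithin_restrict' s ht]
  exact hf.localize

section ContinuousConvergence

variable {E : Type*} [TopologicalSpace E]

def ContinuousConvergenceOn (jh : ℝ → E → ℝ) (j : E → ℝ) (K : Set E) : Prop :=
  ∀ v ∈ K, ∀ vh : ℝ → E, (∀ h > (0 : ℝ), vh h ∈ K) → Tendsto vh (𝓝[>] (0 : ℝ)) (𝓝 v) →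
    Tendsto (fun h ↦ jh h (vh h)) (𝓝[>] (0 : ℝ)) (𝓝 (j v))

/-- The hypothesis only speaks of functions of `h`; the sequence is extended to one by the constant
`v` off the range of `θ`. -/
theorem ContinuousConvergenceOn.tendsto_comp_seq {jh : ℝ → E → ℝ} {j : E → ℝ} {K : Set E}
    (hconv : ContinuousConvergenceOn jh j K) {uh : ℝ → E} (huh : ∀ h > (0 : ℝ), uh h ∈ K)
    {θ : ℕ → ℝ} (hθ : Tendsto θ atTop (𝓝[>] 0)) {v : E} (hv : v ∈ K)
    (hθv : Tendsto (uh ∘ θ) atTop (𝓝 v)) :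
    Tendsto (fun n ↦ jh (θ n) (uh (θ n))) atTop (𝓝 (j v)) := by
  classical
  set vh : ℝ → E := (range θ).piecewise uh fun _ ↦ v
  have hvh : Tendsto vh (𝓝[>] 0) (𝓝 v) :=
    tendsto_piecewise_range_of_tendsto_comp (nhdsGT_le_cofinite 0)
      (Nat.cofinite_eq_atTop ▸ hθv)
  have hvhK : ∀ h > (0 : ℝ), vh h ∈ K := fun h hh ↦ by
    by_cases hr : h ∈ range θ <;> simp [vh, hr, huh h hh, hv]
  simpa [Function.comp_def, vh] using (hconv v hv vh hvhK hvh).comp hθ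

variable [FirstCountableTopology E]

theorem ContinuousConvergenceOn.tendsto_of_isMinOn {jh : ℝ → E → ℝ} {j : E → ℝ} {K S : Set E}
    (hconv : ContinuousConvergenceOn jh j K) (hS : IsCompact S) (hSK : S ⊆ K) {u : E}
    (hu : u ∈ S) (hstrict : ∀ v ∈ S, v ≠ u → j u < j v) {uh : ℝ → E}
    (huh : ∀ h > (0 : ℝ), uh h ∈ S) (hmin : ∀ h > (0 : ℝ), IsMinOn (jh h) S (uh h)) :
    Tendsto uh (𝓝[>] 0) (𝓝 u) := by
  refine hS.tendsto_nhds_of_unique_mapClusterPt (eventually_mem_nhdsWithin.mono huh)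
    fun v hvS hv ↦ ?_
  obtain ⟨θ, hθ, hθv⟩ := exists_seq_comp_tendsto hv
  have hlim_v : Tendsto (fun n ↦ jh (θ n) (uh (θ n))) atTop (𝓝 (j v)) :=
    hconv.tendsto_comp_seq (fun h hh ↦ hSK (huh h hh)) hθ (hSK hvS) hθv
  have hlim_u : Tendsto (fun n ↦ jh (θ n) u) atTop (𝓝 (j u)) :=
    (hconv u (hSK hu) _ (fun _ _ ↦ hSK hu) tendsto_const_nhds).comp hθ
  have hle : j v ≤ j u := le_of_tendsto_of_tendsto hlim_v hlim_u <|
    (hθ.eventually self_mem_nhdsWithin).mono fun n hn ↦ hmin (θ n) hn hu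
  by_contra hne
  exact (hstrict v hvS hne).not_ge hle

end ContinuousConvergence

theorem convergence_of_local_discrete_solutions_general (ℓ : ℕ)
    (K : Set (EuclideanSpace ℝ (Fin ℓ))) (hKcpt : IsCompact K)
    (j : EuclideanSpace ℝ (Fin ℓ) → ℝ)
    (jh : ℝ → EuclideanSpace ℝ (Fin ℓ) → ℝ)
    (hjh : ∀ h > (0 : ℝ), ContinuousOn (jh h) K)
    (hconv : ∀ v ∈ K, ∀ vh : ℝ → EuclideanSpace ℝ (Fin ℓ),
      (∀ h > (0 : ℝ), vh h ∈ K) → Tendsto vh (𝓝[>] (0 : ℝ)) (𝓝 v) →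
      Tendsto (fun h => jh h (vh h)) (𝓝[>] (0 : ℝ)) (𝓝 (j v)))
    (u_star : EuclideanSpace ℝ (Fin ℓ)) (hu : u_star ∈ K) (δ : ℝ) (hδ : 0 < δ)
    (hstrict : ∀ u ∈ K ∩ closedBall u_star δ, u ≠ u_star → j u_star < j u) :
    ∃ uh : ℝ → EuclideanSpace ℝ (Fin ℓ), ∃ h₀ > (0 : ℝ),
      (∀ h, 0 < h → h < h₀ →
        uh h ∈ K ∧ ‖uh h - u_star‖ < δ ∧ IsLocalMinOn (jh h) K (uh h)) ∧
      Tendsto uh (𝓝[>] (0 : ℝ)) (𝓝 u_star) ∧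
      Tendsto (fun h => jh h (uh h)) (𝓝[>] (0 : ℝ)) (𝓝 (j u_star)) := by
  set S := K ∩ closedBall u_star δ
  have hS : IsCompact S := hKcpt.inter_right isClosed_closedBall
  have huS : u_star ∈ S := ⟨hu, mem_closedBall_self hδ.le⟩
  have hmin : ∀ h > (0 : ℝ), ∃ x ∈ S, IsMinOn (jh h) S x := fun h hh ↦
    hS.exists_isMinOn ⟨_, huS⟩ ((hjh h hh).mono inter_subset_left)
  choose! uh huhS huhmin using hmin
  have htend : Tendsto uh (𝓝[>] 0) (𝓝 u_star) :=
    ContinuousConvergenceOn.tendsto_of_isMinOn hconv hS inter_subset_left huS hstrict huhS huhmin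
  obtain ⟨h₀, hh₀, hball⟩ :=
    mem_nhdsGT_iff_exists_Ioo_subset.mp (htend (ball_mem_nhds u_star hδ))
  refine ⟨uh, h₀, hh₀, fun h hh hhh₀ ↦ ?_, htend,
    hconv u_star hu uh (fun h hh ↦ (huhS h hh).1) htend⟩
  have hdist : dist (uh h) u_star < δ := hball ⟨hh, hhh₀⟩
  exact ⟨(huhS h hh).1, dist_eq_norm (uh h) u_star ▸ hdist,
    (huhmin h hh).isLocalMinOn_of_mem_nhds (closedBall_mem_nhds_of_mem hdist)⟩

theorem convergence_of_local_discrete_solutions (ℓ : ℕ)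
    (K : Set (EuclideanSpace ℝ (Fin ℓ))) (hKcpt : IsCompact K) (hKconv : Convex ℝ K)
    (j : EuclideanSpace ℝ (Fin ℓ) → ℝ) (hj : ContinuousOn j K)
    (jh : ℝ → EuclideanSpace ℝ (Fin ℓ) → ℝ)
    (hjh : ∀ h > (0 : ℝ), ContinuousOn (jh h) K)
    (hconv : ∀ v ∈ K, ∀ vh : ℝ → EuclideanSpace ℝ (Fin ℓ),
      (∀ h > (0 : ℝ), vh h ∈ K) → Tendsto vh (𝓝[>] (0 : ℝ)) (𝓝 v) →
      Tendsto (fun h => jh h (vh h)) (𝓝[>] (0 : ℝ)) (𝓝 (j v)))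
    (u_star : EuclideanSpace ℝ (Fin ℓ)) (hu : u_star ∈ K) (δ : ℝ) (hδ : 0 < δ)
    (hstrict : ∀ u ∈ K ∩ closedBall u_star δ, u ≠ u_star → j u_star < j u) :
    ∃ uh : ℝ → EuclideanSpace ℝ (Fin ℓ), ∃ h₀ > (0 : ℝ),
      (∀ h, 0 < h → h < h₀ →
        uh h ∈ K ∧ ‖uh h - u_star‖ < δ ∧ IsLocalMinOn (jh h) K (uh h)) ∧
      Tendsto uh (𝓝[>] (0 : ℝ)) (𝓝 u_star) ∧
      Tendsto (fun h => jh h (uh h)) (𝓝[>] (0 : ℝ)) (𝓝 (j u_star)) :=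
  convergence_of_local_discrete_solutions_general ℓ K hKcpt j jh hjh hconv u_star hu δ hδ hstrict
end
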